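/- arXiv:1905.12148 — 2 statements merged into one kernel-verified Lean document; each statement's English description precedes it below -/
import Mathlib

section
/- The function f is strictly increasing on [0,1]: for all x, y ∈ [0,1] with x < y one has f(x) < f(y). -/
/-!
For `x < 1`, `f x` is the base-`q` digit sum of the Q-digits of `x`, and these are admissible
base-`q` digits because `q_n ≤ q`. Increasing `x` increases its digit sequence
lexicographically, since the floors `⌊q_1⋯q_n x⌋` determine the digits and eventually separate
`x < y`. A base-`q` digit sum is strictly monotone for the lexicographic order as long as the
smaller sequence is not eventually `q - 1`, and a Q-expansion is never eventually maximal: if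
`ε_n(x) = q_n - 1` for all `n ≥ N`, the gap `1 - {q_1⋯q_n x}` would double at every step.
The point `1` is handled in the same way, its digit sequence `(q_n - 1)` lying lexicographically
above every Q-expansion.
-/

open Filter Topology MeasureTheory

/-- Product `q_1 ⋯ q_n` of the first `n` bases (0-indexed sequence `a`). -/
noncomputable def cantorProd (a : ℕ → ℕ) (n : ℕ) : ℕ := ∏ j ∈ Finset.range n, a j

/-- The canonical Q-digit of `x` at (0-indexed) position `n`:
`ε_{n+1}(x) = ⌊q_1⋯q_{n+1} x⌋ - q_{n+1} ⌊q_1⋯q_n x⌋`. -/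
noncomputable def cantorDigit (a : ℕ → ℕ) (x : ℝ) (n : ℕ) : ℤ :=
  ⌊(cantorProd a (n + 1) : ℝ) * x⌋ - (a n : ℤ) * ⌊(cantorProd a n : ℝ) * x⌋

/-- The function `f`: for `x < 1`, `f(x) = ∑ ε_n(x)/q^n`; `f(1) = ∑ (q_n - 1)/q^n`. -/
noncomputable def cantorF (a : ℕ → ℕ) (q : ℕ) (x : ℝ) : ℝ :=
  if x < 1 then ∑' n : ℕ, (cantorDigit a x n : ℝ) / (q : ℝ) ^ (n + 1)
  else ∑' n : ℕ, ((a n : ℝ) - 1) / (q : ℝ) ^ (n + 1)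

/-- `x ∈ (0,1)` is Q-rational if it is a finite sum `∑_{i=1}^m c_i/(q_1⋯q_i)`
with digits `0 ≤ c_i ≤ q_i - 1`. -/
def QRational (a : ℕ → ℕ) (x : ℝ) : Prop :=
  x ∈ Set.Ioo (0 : ℝ) 1 ∧
    ∃ m : ℕ, 1 ≤ m ∧ ∃ c : ℕ → ℕ, (∀ i, c i < a i) ∧
      x = ∑ i ∈ Finset.range m, (c i : ℝ) / ∏ j ∈ Finset.range (i + 1), (a j : ℝ)

noncomputable def digitSum (q : ℕ) (d : ℕ → ℤ) : ℝ := ∑' n, (d n : ℝ) / (q : ℝ) ^ (n + 1)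

theorem frequently_atTop_add_one {p : ℕ → Prop} (h : ∃ᶠ n in atTop, p n) :
    ∃ᶠ n in atTop, p (n + 1) := by
  rwa [← map_add_atTop_eq_nat 1, frequently_map] at h

section DigitSum

variable {q : ℕ} {d e : ℕ → ℤ}

theorem hasSum_pred_div_pow (hq : 1 < q) :
    HasSum (fun n : ℕ => ((q : ℝ) - 1) / (q : ℝ) ^ (n + 1)) 1 := by
  have hq' : (1 : ℝ) < q := by exact_mod_cast hq
  have hgeom := (hasSum_geometric_of_lt_one (by positivity) (inv_lt_one_of_one_lt₀ hq')).mul_left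
    (((q : ℝ) - 1) / q)
  have hq1 : (q : ℝ) - 1 ≠ 0 := by linarith
  have hsum : ((q : ℝ) - 1) / q * (1 - (q : ℝ)⁻¹)⁻¹ = 1 := by field_simp
  have hterm : ∀ n : ℕ, ((q : ℝ) - 1) / q * (q : ℝ)⁻¹ ^ n = ((q : ℝ) - 1) / (q : ℝ) ^ (n + 1) :=
    fun n => by rw [pow_succ', inv_pow]; field_simp
  simpa only [hsum, hterm] using hgeom

theorem summable_digit_div_pow (hq : 1 < q) (hd : ∀ n, 0 ≤ d n ∧ d n < q) :
    Summable fun n => (d n : ℝ) / (q : ℝ) ^ (n + 1) := by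
  refine (hasSum_pred_div_pow hq).summable.of_nonneg_of_le
    (fun n => div_nonneg (Int.cast_nonneg (hd n).1) (by positivity)) fun n => ?_
  have : (d n : ℝ) + 1 ≤ q := by exact_mod_cast (hd n).2
  gcongr
  linarith

theorem digitSum_nonneg (hd : ∀ n, 0 ≤ d n) : 0 ≤ digitSum q d :=
  tsum_nonneg fun n => div_nonneg (Int.cast_nonneg (hd n)) (by positivity)

theorem digitSum_lt_one (hq : 1 < q) (hd : ∀ n, 0 ≤ d n ∧ d n < q) (h : ∃ n, d n + 1 < q) :
    digitSum q d < 1 := by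
  obtain ⟨i, hi⟩ := h
  have hle : ∀ n, (d n : ℝ) ≤ q - 1 := fun n => by
    have : (d n : ℝ) + 1 ≤ q := by exact_mod_cast (hd n).2
    linarith
  have hlt : (d i : ℝ) < q - 1 := by
    have : (d i : ℝ) + 1 < q := by exact_mod_cast hi
    linarith
  refine hasSum_lt (i := i) (fun n => ?_) ?_ (summable_digit_div_pow hq hd).hasSum
    (hasSum_pred_div_pow hq) <;> gcongr
  exact hle n

theorem digitSum_eq_head_add (hq : 1 < q) (hd : ∀ n, 0 ≤ d n ∧ d n < q) :
    digitSum q d = (d 0 + digitSum q fun n => d (n + 1)) / q := by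
  rw [digitSum, (summable_digit_div_pow hq hd).tsum_eq_zero_add, digitSum, add_div,
    ← tsum_div_const]
  simp only [pow_succ, div_div, zero_add, pow_zero, one_mul]

theorem digitSum_lt_of_toLex_lt (hq : 1 < q) (hd : ∀ n, 0 ≤ d n ∧ d n < q)
    (he : ∀ n, 0 ≤ e n ∧ e n < q) (hfreq : ∃ᶠ n in atTop, d n + 1 < q)
    (hlt : toLex d < toLex e) : digitSum q d < digitSum q e := by
  obtain ⟨M, heq, hM⟩ := hlt
  induction M generalizing d e with
  | zero =>
    rw [digitSum_eq_head_add hq hd, digitSum_eq_head_add hq he]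
    have htail := digitSum_lt_one hq (fun n => hd (n + 1)) (frequently_atTop_add_one hfreq).exists
    have hhead : (d 0 : ℝ) + 1 ≤ e 0 := by exact_mod_cast hM
    have := digitSum_nonneg (q := q) fun n => (he (n + 1)).1
    gcongr ?_ / _
    linarith
  | succ M ih =>
    have hhead : d 0 = e 0 := heq 0 M.succ_pos
    rw [digitSum_eq_head_add hq hd, digitSum_eq_head_add hq he, hhead]
    gcongr
    exact ih (fun n => hd (n + 1)) (fun n => he (n + 1)) (frequently_atTop_add_one hfreq)
      (fun j hj => heq (j + 1) (by omega)) hM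

end DigitSum

section CantorDigit

variable {a : ℕ → ℕ}

theorem cantorProd_succ (a : ℕ → ℕ) (n : ℕ) : cantorProd a (n + 1) = cantorProd a n * a n :=
  Finset.prod_range_succ _ _

theorem tendsto_cantorProd_atTop (ha : ∀ n, 2 ≤ a n) :
    Tendsto (fun n => (cantorProd a n : ℝ)) atTop atTop := by
  refine tendsto_atTop_mono (fun n => ?_) (tendsto_pow_atTop_atTop_of_one_lt one_lt_two)
  have := Finset.pow_card_le_prod (Finset.range n) a 2 fun i _ => ha i
  rw [Finset.card_range] at this
  exact_mod_cast this

theorem fract_cantorProd_succ_mul (a : ℕ → ℕ) (x : ℝ) (n : ℕ) :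
    Int.fract ((cantorProd a (n + 1) : ℝ) * x)
      = a n * Int.fract ((cantorProd a n : ℝ) * x) - cantorDigit a x n := by
  simp only [Int.fract, cantorDigit, cantorProd_succ]
  push_cast
  ring

theorem cantorDigit_nonneg (a : ℕ → ℕ) (x : ℝ) (n : ℕ) : 0 ≤ cantorDigit a x n := by
  have h := fract_cantorProd_succ_mul a x n
  have : (0 : ℝ) ≤ a n * Int.fract ((cantorProd a n : ℝ) * x) := by positivity
  have : (-1 : ℝ) < cantorDigit a x n := by
    linarith [Int.fract_lt_one ((cantorProd a (n + 1) : ℝ) * x)]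
  have : (-1 : ℤ) < cantorDigit a x n := by exact_mod_cast this
  omega

theorem cantorDigit_lt {n : ℕ} (ha : 0 < a n) (x : ℝ) : cantorDigit a x n < a n := by
  have h := fract_cantorProd_succ_mul a x n
  have : (a n : ℝ) * Int.fract ((cantorProd a n : ℝ) * x) < a n :=
    mul_lt_of_lt_one_right (by exact_mod_cast ha) (Int.fract_lt_one _)
  have : (cantorDigit a x n : ℝ) < a n := by
    linarith [Int.fract_nonneg ((cantorProd a (n + 1) : ℝ) * x)]
  exact_mod_cast this

theorem frequently_cantorDigit_add_one_lt (ha : ∀ n, 2 ≤ a n) (x : ℝ) :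
    ∃ᶠ n in atTop, cantorDigit a x n + 1 < a n := by
  rw [frequently_atTop]
  intro N
  by_contra! hmax
  set gap : ℕ → ℝ := fun n => 1 - Int.fract ((cantorProd a n : ℝ) * x)
  have hgap_le : ∀ n, gap n ≤ 1 := fun n => by simp [gap, Int.fract_nonneg]
  have hgap_pos : 0 < gap N := by simp [gap, Int.fract_lt_one]
  have hgrow : ∀ k, 2 ^ k * gap N ≤ gap (N + k) := by
    intro k
    induction k with
    | zero => simp
    | succ k ih =>
      have hdigit : cantorDigit a x (N + k) = a (N + k) - 1 := by
        have := hmax (N + k) (by omega)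
        have := cantorDigit_lt (by have := ha (N + k); omega : 0 < a (N + k)) x
        omega
      have hstep : gap (N + k + 1) = a (N + k) * gap (N + k) := by
        simp only [gap, fract_cantorProd_succ_mul, hdigit]
        push_cast
        ring
      have h2 : (2 : ℝ) ≤ a (N + k) := by exact_mod_cast ha (N + k)
      have : 0 ≤ gap (N + k) := le_trans (by positivity) ih
      rw [← add_assoc, hstep]
      calc 2 ^ (k + 1) * gap N = 2 * (2 ^ k * gap N) := by ring
        _ ≤ 2 * gap (N + k) := by gcongr
        _ ≤ a (N + k) * gap (N + k) := by gcongr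
  obtain ⟨k, hk⟩ := pow_unbounded_of_one_lt (gap N)⁻¹ one_lt_two
  have := (inv_lt_iff_one_lt_mul₀ hgap_pos).1 hk
  linarith [hgrow k, hgap_le (N + k)]

theorem toLex_cantorDigit_lt (ha : ∀ n, 2 ≤ a n) {x y : ℝ} (hx : 0 ≤ x) (hxy : x < y)
    (hy : y < 1) : toLex (cantorDigit a x) < toLex (cantorDigit a y) := by
  set F : ℝ → ℕ → ℤ := fun z n => ⌊(cantorProd a n : ℝ) * z⌋
  have hF : F x < F y := by
    refine Pi.lt_def.2 ⟨fun n => Int.floor_mono (by gcongr), ?_⟩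
    have hgap := (tendsto_cantorProd_atTop ha).atTop_mul_const (sub_pos.2 hxy)
    obtain ⟨n, hn⟩ := (hgap.eventually_gt_atTop 1).exists
    refine ⟨n, ?_⟩
    rw [← Int.add_one_le_iff, ← Int.floor_add_one]
    exact Int.floor_mono (by linarith)
  obtain ⟨i, hbelow, hi⟩ := Pi.toLex_strictMono hF
  obtain ⟨M, rfl⟩ : ∃ M, i = M + 1 := by
    refine Nat.exists_eq_succ_of_ne_zero fun h => ?_
    subst h
    simp [F, cantorProd, Int.floor_eq_zero_iff.2 ⟨hx, hxy.trans hy⟩,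
      Int.floor_eq_zero_iff.2 ⟨hx.trans hxy.le, hy⟩] at hi
  have hprefix : ∀ j ≤ M, F x j = F y j := fun j hj => hbelow j (by omega)
  refine ⟨M, fun j hj => ?_, ?_⟩
  · show F x (j + 1) - a j * F x j = F y (j + 1) - a j * F y j
    rw [hprefix j (by omega), hprefix (j + 1) (by omega)]
  · show F x (M + 1) - a M * F x M < F y (M + 1) - a M * F y M
    rw [hprefix M le_rfl]
    exact Int.sub_lt_sub_right hi _

theorem toLex_cantorDigit_lt_pred (ha : ∀ n, 2 ≤ a n) (x : ℝ) :
    toLex (cantorDigit a x) < toLex fun n => (a n : ℤ) - 1 := by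
  refine Pi.toLex_strictMono (Pi.lt_def.2 ⟨fun n => ?_, ?_⟩)
  · have := cantorDigit_lt (by have := ha n; omega : 0 < a n) x
    show _ ≤ (a n : ℤ) - 1
    omega
  · obtain ⟨n, hn⟩ := (frequently_cantorDigit_add_one_lt ha x).exists
    exact ⟨n, show _ < (a n : ℤ) - 1 by omega⟩

end CantorDigit

/-- `f` is strictly increasing on `[0,1]`. -/
theorem stmt5 (q : ℕ) (hq : 2 ≤ q) (a : ℕ → ℕ) (ha : ∀ n, 2 ≤ a n ∧ a n ≤ q) :
    StrictMonoOn (cantorF a q) (Set.Icc (0 : ℝ) 1) := by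
  intro x hx y hy hxy
  have ha2 n : 2 ≤ a n := (ha n).1
  have hdigits (z : ℝ) n : 0 ≤ cantorDigit a z n ∧ cantorDigit a z n < q :=
    ⟨cantorDigit_nonneg a z n, (cantorDigit_lt (by have := ha2 n; omega) z).trans_le
      (by exact_mod_cast (ha n).2)⟩
  have hfreq : ∃ᶠ n in atTop, cantorDigit a x n + 1 < q :=
    (frequently_cantorDigit_add_one_lt ha2 x).mono fun n hn =>
      hn.trans_le (by exact_mod_cast (ha n).2)
  have hx1 : x < 1 := hxy.trans_le hy.2
  have hq1 : 1 < q := by omega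
  rw [cantorF, if_pos hx1]
  rcases hy.2.eq_or_lt with rfl | hy1
  · have hmax n : 0 ≤ (a n : ℤ) - 1 ∧ (a n : ℤ) - 1 < q := by have := ha n; omega
    have := digitSum_lt_of_toLex_lt hq1 (hdigits x) hmax hfreq (toLex_cantorDigit_lt_pred ha2 x)
    rw [cantorF, if_neg (lt_irrefl 1)]
    push_cast [digitSum] at this
    exact this
  · rw [cantorF, if_pos hy1]
    exact digitSum_lt_of_toLex_lt hq1 (hdigits x) (hdigits y) hfreq
      (toLex_cantorDigit_lt ha2 hx.1 hxy hy1)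
end

section
/- If u ∈ {0,1}, then the function g is strictly decreasing on D: for all α, β ∈ Θ^{ℕ≥1} with h(α) < h(β) one has Φ(α) > Φ(β). If u ∈ {q−2, q−1}, then g is strictly increasing on D: for all α, β ∈ Θ^{ℕ≥1}, h(α) < h(β) implies Φ(α) < Φ(β). -/
/-!
In base `q`, `h(α)` has the digit string `u…u α₁ u…u α₂ …`: digit `αₙ` at place `Sₙ(α)` and `u`
everywhere else (`u/(q-1) = 0.uuu…`), while `Φ(α) = 0.α₁α₂…`. If `α` and `β` first differ at
index `k`, with `αₖ < βₖ`, the two strings agree before place `Sₖ(α)`, where `h(α)` shows `αₖ`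
and `h(β)` shows `u`; as all later `αₙ` are nonzero, this digit decides the comparison. Hence `h`
is strictly decreasing in the lexicographic order when `u ≤ 1` (every digit of `Θ` exceeds `u`)
and strictly increasing when `u ≥ q - 2` (the smaller of two distinct digits of `Θ` is below
`u`), whereas `Φ` is strictly increasing.
-/

open Filter Topology MeasureTheory

/-- `α` is a sequence with all terms in `Θ = {1,…,q-1} \ {u}`. -/
def ThetaSeq (q u : ℕ) (α : ℕ → ℕ) : Prop :=
  ∀ n, 1 ≤ α n ∧ α n ≤ q - 1 ∧ α n ≠ u

/-- `S_{n+1}(α) = α_1 + ⋯ + α_{n+1}` (0-indexed: `α i` is the paper's `α_{i+1}`). -/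
def Ssum (α : ℕ → ℕ) (n : ℕ) : ℕ := ∑ i ∈ Finset.range (n + 1), α i

/-- `h(α) = u/(q-1) + ∑_{n≥1} (α_n - u) q^{-S_n(α)}`. -/
noncomputable def hmap (q u : ℕ) (α : ℕ → ℕ) : ℝ :=
  (u : ℝ) / ((q : ℝ) - 1) +
    ∑' n : ℕ, ((α n : ℝ) - (u : ℝ)) / (q : ℝ) ^ (Ssum α n)

/-- `Φ(α) = ∑_{n≥1} α_n q^{-n}`. -/
noncomputable def Phi (q : ℕ) (α : ℕ → ℕ) : ℝ :=
  ∑' n : ℕ, (α n : ℝ) / (q : ℝ) ^ (n + 1)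

/-- `D = {h(α) : α ∈ Θ^{ℕ≥1}}`. -/
def Dset (q u : ℕ) : Set ℝ := {x | ∃ α, ThetaSeq q u α ∧ hmap q u α = x}

/-- `E = {Φ(α) : α ∈ Θ^{ℕ≥1}}`. -/
def Eset (q u : ℕ) : Set ℝ := {y | ∃ α, ThetaSeq q u α ∧ Phi q α = y}

open Function Real

namespace Real

theorem ofDigits_pos {b : ℕ} {x : ℕ → Fin b} {m : ℕ} (hm : 0 < (x m : ℕ)) :
    0 < ofDigits x := by
  have hb : (0 : ℝ) < b := by exact_mod_cast (x m).pos
  have hxm : (0 : ℝ) < (x m : ℕ) := by exact_mod_cast hm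
  exact summable_ofDigitsTerm.tsum_pos (fun _ => ofDigitsTerm_nonneg) m
    (mul_pos hxm (by positivity))

-- The later nonzero digit of `y` excludes ties such as `0.0999… = 0.1000…`.
theorem ofDigits_lt_ofDigits {b : ℕ} {x y : ℕ → Fin b} {n m : ℕ} (hxy : ∀ i < n, x i = y i)
    (hn : x n < y n) (hnm : n < m) (hm : 0 < (y m : ℕ)) : ofDigits x < ofDigits y := by
  have hb : (0 : ℝ) < b := by exact_mod_cast (x n).pos
  have hprefix :
      ∑ i ∈ Finset.range n, ofDigitsTerm x i = ∑ i ∈ Finset.range n, ofDigitsTerm y i :=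
    Finset.sum_congr rfl fun i hi => by simp [ofDigitsTerm, hxy i (Finset.mem_range.mp hi)]
  have hx_tail := ofDigits_le_one fun i => x (i + (n + 1))
  have hy_tail : 0 < ofDigits fun i => y (i + (n + 1)) :=
    ofDigits_pos (m := m - (n + 1)) (by rwa [Nat.sub_add_cancel hnm])
  have hdigit : ((x n : ℕ) : ℝ) + 1 ≤ (y n : ℕ) := by exact_mod_cast hn
  have hB : 0 < ((b : ℝ) ^ (n + 1))⁻¹ := by positivity
  rw [ofDigits_eq_sum_add_ofDigits x (n + 1), ofDigits_eq_sum_add_ofDigits y (n + 1),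
    Finset.sum_range_succ, Finset.sum_range_succ, hprefix]
  simp only [ofDigitsTerm]
  nlinarith

theorem ofDigits_extend {b : ℕ} (hb : 1 < b) {p : ℕ → ℕ} (hp : Injective p) (a : ℕ → Fin b)
    (u : Fin b) :
    ofDigits (extend p a fun _ => u) = u / (b - 1) + ∑' n, ((a n : ℝ) - u) / b ^ (p n + 1) := by
  set x := extend p a fun _ => u
  have hb' : (1 : ℝ) < b := by exact_mod_cast hb
  have hgeom : HasSum (fun j : ℕ => (u : ℝ) * ((b : ℝ) ^ (j + 1))⁻¹) (u / (b - 1)) := by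
    have hterm : (fun j : ℕ => (u : ℝ) * ((b : ℝ) ^ (j + 1))⁻¹) =
        fun j => (u : ℝ) * (b : ℝ)⁻¹ * (b : ℝ)⁻¹ ^ j := by
      funext j; rw [pow_succ', mul_inv, inv_pow]; ring
    have hsum : (u : ℝ) / (b - 1) = u * (b : ℝ)⁻¹ * (1 - (b : ℝ)⁻¹)⁻¹ := by
      field_simp [(by linarith : (b : ℝ) - 1 ≠ 0)]
    rw [hterm, hsum]
    exact (hasSum_geometric_of_lt_one (by positivity) (inv_lt_one_of_one_lt₀ hb')).mul_left _
  have hdev : (fun j => ofDigitsTerm x j - u * ((b : ℝ) ^ (j + 1))⁻¹) =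
      extend p (fun n => ((a n : ℝ) - u) / b ^ (p n + 1)) 0 := by
    funext j
    by_cases hj : ∃ n, p n = j
    · obtain ⟨n, rfl⟩ := hj
      simp [x, ofDigitsTerm, hp.extend_apply, div_eq_mul_inv, sub_mul]
    · simp [x, ofDigitsTerm, extend_apply' _ _ _ hj]
  have hsplit :
      ofDigits x - u / (b - 1) = ∑' j, (ofDigitsTerm x j - u * ((b : ℝ) ^ (j + 1))⁻¹) := by
    rw [summable_ofDigitsTerm.tsum_sub hgeom.summable, hgeom.tsum_eq]; rfl
  rw [hdev, tsum_extend_zero hp] at hsplit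
  linarith

end Real

namespace Function

variable {γ : Type*} {p p' : ℕ → ℕ} {a a' e : ℕ → γ} {k : ℕ}

theorem extend_eq_extend_of_lt_apply (hp : StrictMono p) (hp' : StrictMono p')
    (hpk : ∀ n < k, p n = p' n) (hak : ∀ n < k, a n = a' n) (hk : p k < p' k) {j : ℕ}
    (hj : j < p k) : extend p a e j = extend p' a' e j := by
  by_cases h : ∃ n, p n = j
  · obtain ⟨n, rfl⟩ := h
    have hn : n < k := hp.lt_iff_lt.mp hj
    rw [hp.injective.extend_apply, hpk n hn, hp'.injective.extend_apply, hak n hn]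
  · rw [extend_apply' _ _ _ h, extend_apply']
    rintro ⟨n, rfl⟩
    exact h ⟨n, hpk n (hp'.lt_iff_lt.mp (hj.trans hk))⟩

theorem extend_apply_of_lt_apply (hp : StrictMono p) (hp' : StrictMono p')
    (hpk : ∀ n < k, p n = p' n) (hk : p k < p' k) : extend p' a' e (p k) = e (p k) := by
  refine extend_apply' _ _ _ fun ⟨n, hn⟩ => ?_
  have hnk : n < k := hp'.lt_iff_lt.mp (hn ▸ hk)
  exact hnk.ne (hp.injective ((hpk n hnk).trans hn))

end Function

variable {q u k : ℕ} {α β : ℕ → ℕ}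

theorem ThetaSeq.one_le (hα : ThetaSeq q u α) (n : ℕ) : 1 ≤ α n := (hα n).1

theorem ThetaSeq.lt (hα : ThetaSeq q u α) (n : ℕ) : α n < q := by
  have := hα n
  omega

theorem ThetaSeq.one_lt (hα : ThetaSeq q u α) : 1 < q := by
  have := hα 0
  omega

theorem Ssum_eq_Ssum_of_lt (hag : ∀ i < k, α i = β i) {n : ℕ} (hn : n < k) :
    Ssum α n = Ssum β n :=
  Finset.sum_congr rfl fun i hi => hag i (by have := Finset.mem_range.mp hi; omega)

theorem Ssum_lt_Ssum (hag : ∀ i < k, α i = β i) (hk : α k < β k) : Ssum α k < Ssum β k := by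
  have hprefix : ∑ i ∈ Finset.range k, α i = ∑ i ∈ Finset.range k, β i :=
    Finset.sum_congr rfl fun i hi => hag i (Finset.mem_range.mp hi)
  rw [Ssum, Ssum, Finset.sum_range_succ, Finset.sum_range_succ, hprefix]
  omega

theorem one_le_Ssum (hα : 1 ≤ α 0) (n : ℕ) : 1 ≤ Ssum α n :=
  hα.trans (Finset.single_le_sum (fun _ _ => Nat.zero_le _) (Finset.mem_range.mpr n.succ_pos))

theorem strictMono_Ssum_sub_one (hα : ∀ n, 1 ≤ α n) : StrictMono fun n => Ssum α n - 1 := by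
  refine strictMono_nat_of_lt_succ fun n => ?_
  have := one_le_Ssum (hα 0) n
  have := hα (n + 1)
  rw [show Ssum α (n + 1) = Ssum α n + α (n + 1) from Finset.sum_range_succ _ _]
  omega

theorem Ssum_sub_one_lt_Ssum_sub_one (hα : 1 ≤ α 0) (hag : ∀ i < k, α i = β i)
    (hk : α k < β k) : Ssum α k - 1 < Ssum β k - 1 := by
  have := Ssum_lt_Ssum hag hk
  have := one_le_Ssum hα k
  omega

-- `ofDigits` puts digit `j` at place `j + 1`, hence the `- 1`.
noncomputable def hDigits (hα : ∀ n, α n < q) (hu : u < q) : ℕ → Fin q :=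
  extend (fun n => Ssum α n - 1) (fun n => ⟨α n, hα n⟩) fun _ => ⟨u, hu⟩

theorem hDigits_apply_Ssum_sub_one (hα : ∀ n, 1 ≤ α n) (hαq : ∀ n, α n < q) (hu : u < q)
    (n : ℕ) : hDigits hαq hu (Ssum α n - 1) = ⟨α n, hαq n⟩ :=
  (strictMono_Ssum_sub_one hα).injective.extend_apply _ _ n

theorem hmap_eq_ofDigits (hα : ThetaSeq q u α) (hu : u < q) :
    hmap q u α = ofDigits (hDigits hα.lt hu) := by
  rw [hDigits, ofDigits_extend hα.one_lt (strictMono_Ssum_sub_one hα.one_le).injective, hmap]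
  congr 1
  refine tsum_congr fun n => ?_
  rw [Nat.sub_add_cancel (one_le_Ssum (hα.one_le 0) n)]

theorem Phi_eq_ofDigits (hα : ∀ n, α n < q) : Phi q α = ofDigits fun n => ⟨α n, hα n⟩ :=
  tsum_congr fun n => by simp [ofDigitsTerm, div_eq_mul_inv]

section Lex

variable (hα : ThetaSeq q u α) (hβ : ThetaSeq q u β) (hu : u < q)
  (hag : ∀ i < k, α i = β i) (hk : α k < β k)
include hα hβ hu hag hk

theorem hDigits_eq_hDigits_of_lt {j : ℕ} (hj : j < Ssum α k - 1) :
    hDigits hα.lt hu j = hDigits hβ.lt hu j :=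
  extend_eq_extend_of_lt_apply (strictMono_Ssum_sub_one hα.one_le)
    (strictMono_Ssum_sub_one hβ.one_le) (fun n hn => by rw [Ssum_eq_Ssum_of_lt hag hn])
    (fun n hn => Fin.ext (hag n hn)) (Ssum_sub_one_lt_Ssum_sub_one (hα.one_le 0) hag hk) hj

theorem hDigits_apply_Ssum_sub_one_of_lex : hDigits hβ.lt hu (Ssum α k - 1) = ⟨u, hu⟩ :=
  extend_apply_of_lt_apply (p := fun n => Ssum α n - 1) (strictMono_Ssum_sub_one hα.one_le)
    (strictMono_Ssum_sub_one hβ.one_le) (fun n hn => by rw [Ssum_eq_Ssum_of_lt hag hn])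
    (Ssum_sub_one_lt_Ssum_sub_one (hα.one_le 0) hag hk)

theorem hmap_lt_hmap_of_lex_of_lt (hku : α k < u) : hmap q u α < hmap q u β := by
  rw [hmap_eq_ofDigits hα hu, hmap_eq_ofDigits hβ hu]
  refine ofDigits_lt_ofDigits (fun j hj => hDigits_eq_hDigits_of_lt hα hβ hu hag hk hj) ?_
    (Ssum_sub_one_lt_Ssum_sub_one (hα.one_le 0) hag hk) ?_
  · rw [hDigits_apply_Ssum_sub_one hα.one_le, hDigits_apply_Ssum_sub_one_of_lex hα hβ hu hag hk]
    exact hku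
  · rw [hDigits_apply_Ssum_sub_one hβ.one_le]
    exact hβ.one_le k

theorem hmap_lt_hmap_of_lex_of_gt (hku : u < α k) : hmap q u β < hmap q u α := by
  rw [hmap_eq_ofDigits hα hu, hmap_eq_ofDigits hβ hu]
  refine ofDigits_lt_ofDigits
    (fun j hj => (hDigits_eq_hDigits_of_lt hα hβ hu hag hk hj).symm) ?_
    (strictMono_Ssum_sub_one hα.one_le k.lt_succ_self) ?_
  · rw [hDigits_apply_Ssum_sub_one hα.one_le, hDigits_apply_Ssum_sub_one_of_lex hα hβ hu hag hk]
    exact hku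
  · rw [hDigits_apply_Ssum_sub_one hα.one_le]
    exact hα.one_le (k + 1)

end Lex

theorem strictMonoOn_Phi :
    StrictMonoOn (fun x : Lex (ℕ → ℕ) => Phi q (ofLex x)) {x | ThetaSeq q u (ofLex x)} := by
  rintro α hα β hβ ⟨k, hag, hk⟩
  dsimp only
  rw [Phi_eq_ofDigits hα.lt, Phi_eq_ofDigits hβ.lt]
  exact ofDigits_lt_ofDigits (fun i hi => Fin.ext (hag i hi)) hk k.lt_succ_self
    (hβ.one_le (k + 1))

theorem strictMonoOn_hmap (hu : q - 2 ≤ u) (huq : u < q) :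
    StrictMonoOn (fun x : Lex (ℕ → ℕ) => hmap q u (ofLex x)) {x | ThetaSeq q u (ofLex x)} := by
  rintro α hα β hβ ⟨k, hag, hk⟩
  refine hmap_lt_hmap_of_lex_of_lt hα hβ huq hag hk ?_
  have : ofLex α k < ofLex β k := hk
  have := hα k
  have := hβ k
  omega

theorem strictAntiOn_hmap (hu : u ≤ 1) :
    StrictAntiOn (fun x : Lex (ℕ → ℕ) => hmap q u (ofLex x)) {x | ThetaSeq q u (ofLex x)} := by
  rintro α hα β hβ ⟨k, hag, hk⟩
  refine hmap_lt_hmap_of_lex_of_gt hα hβ (by have := hα.one_lt; omega) hag hk ?_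
  have := hα k
  omega

theorem stmt14_general (q : ℕ) (u : ℕ) :
    ((u = 0 ∨ u = 1) →
      ∀ α β, ThetaSeq q u α → ThetaSeq q u β →
        hmap q u α < hmap q u β → Phi q β < Phi q α) ∧
    ((u = q - 2 ∨ u = q - 1) →
      ∀ α β, ThetaSeq q u α → ThetaSeq q u β →
        hmap q u α < hmap q u β → Phi q α < Phi q β) := by
  refine ⟨fun hu α β hα hβ hlt => ?_, fun hu α β hα hβ hlt => ?_⟩
  · have hanti := strictAntiOn_hmap (q := q) (u := u) (by omega)
    exact strictMonoOn_Phi hβ hα ((hanti.lt_iff_gt (a := toLex α) (b := toLex β) hα hβ).mp hlt)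
  · have := hα.one_lt
    have hmono := strictMonoOn_hmap (q := q) (u := u) (by omega) (by omega)
    exact strictMonoOn_Phi hα hβ ((hmono.lt_iff_lt (a := toLex α) (b := toLex β) hα hβ).mp hlt)

/-- if `u ∈ {0,1}` then `g` is strictly decreasing on `D`; if
`u ∈ {q-2, q-1}` then `g` is strictly increasing on `D`. -/
theorem stmt14 (q : ℕ) (hq : 4 ≤ q) (u : ℕ) (hu : u ≤ q - 1) :
    ((u = 0 ∨ u = 1) →
      ∀ α β, ThetaSeq q u α → ThetaSeq q u β →
        hmap q u α < hmap q u β → Phi q β < Phi q α) ∧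
    ((u = q - 2 ∨ u = q - 1) →
      ∀ α β, ThetaSeq q u α → ThetaSeq q u β →
        hmap q u α < hmap q u β → Phi q α < Phi q β) :=
  stmt14_general q u
end
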